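/- arXiv:1905.02817 — 2 statements merged into one kernel-verified Lean document; each statement's English description precedes it below -/
import Mathlib

section
/- Let (x1, x2, z1) be a point satisfying q·F′(x1·p(x1 + x2) − z1) = (1 − q)·σ, and suppose F″(x1·p(x1 + x2) − z1) > 0, p(x1 + x2) > 0, p(x1 + x2) + x1·p′(x1 + x2) > 0, and that the inequality (In2): P_{x1x1}·P_{z1z1} − (P_{x1z1})² > |P_{x1x2}·P_{z1z1} − P_{x1z1}·P_{x2z1}| holds at this point. Then −P_{x1x1} ≥ −P_{x1x2} at this point, where subscripts on P denote iterated partial derivatives. -/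
/-- The profit function
`P(x1, x2, z1) = (1 - qσ) x1 p(x1+x2) - C(x1) - (1-q)σ z1 - q F(x1 p(x1+x2) - z1)`. -/
noncomputable def P (σ q : ℝ) (p C F : ℝ → ℝ) (x1 x2 z1 : ℝ) : ℝ :=
  (1 - q * σ) * x1 * p (x1 + x2) - C x1 - (1 - q) * σ * z1
    - q * F (x1 * p (x1 + x2) - z1)

/-- `∂²P/∂x1²` at `(x1, x2, z1)`. -/
noncomputable def Px1x1 (σ q : ℝ) (p C F : ℝ → ℝ) (x1 x2 z1 : ℝ) : ℝ :=
  deriv (deriv (fun v => P σ q p C F v x2 z1)) x1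

/-- `∂²P/∂z1²` at `(x1, x2, z1)`. -/
noncomputable def Pz1z1 (σ q : ℝ) (p C F : ℝ → ℝ) (x1 x2 z1 : ℝ) : ℝ :=
  deriv (deriv (fun w => P σ q p C F x1 x2 w)) z1

/-- `∂²P/∂x1∂z1` at `(x1, x2, z1)` (first differentiate in `x1`, then in `z1`). -/
noncomputable def Px1z1 (σ q : ℝ) (p C F : ℝ → ℝ) (x1 x2 z1 : ℝ) : ℝ :=
  deriv (fun w => deriv (fun v => P σ q p C F v x2 w) x1) z1

/-- `∂²P/∂x1∂x2` at `(x1, x2, z1)` (first differentiate in `x1`, then in `x2`). -/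
noncomputable def Px1x2 (σ q : ℝ) (p C F : ℝ → ℝ) (x1 x2 z1 : ℝ) : ℝ :=
  deriv (fun u => deriv (fun v => P σ q p C F v u z1) x1) x2

/-- `∂²P/∂x2∂z1` at `(x1, x2, z1)` (first differentiate in `x2`, then in `z1`). -/
noncomputable def Px2z1 (σ q : ℝ) (p C F : ℝ → ℝ) (x1 x2 z1 : ℝ) : ℝ :=
  deriv (fun w => deriv (fun u => P σ q p C F x1 u w) x2) z1

/-! Every second derivative involving `z1` is a multiple of `D = q F''(x1 p - z1) > 0`:
`P_{z1z1} = -D`, `P_{x1z1} = D (p + x1 p')` and `P_{x2z1} = D x1 p'`. Dropping the absolute value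
in (In2) and substituting leaves `D (P_{x1x2} - P_{x1x1}) > D² (p + x1 p') p > 0`. -/

theorem lt_of_det_gt_abs_det {A B D a b : ℝ} (hD : 0 < D) (hab : 0 < a * (a - b))
    (h : A * -D - (D * a) ^ 2 > |B * -D - D * a * (D * b)|) : A < B := by
  have hgap : D * (D * (a * (a - b))) < D * (B - A) := by
    linarith [le_abs_self (B * -D - D * a * (D * b))]
  linarith [lt_of_mul_lt_mul_left hgap hD.le, mul_pos hD hab]

section ProfitDerivatives

variable {σ q : ℝ} {p C F : ℝ → ℝ} {x1 x2 : ℝ}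

theorem hasDerivAt_P_z1 {w : ℝ} (hF : DifferentiableAt ℝ F (x1 * p (x1 + x2) - w)) :
    HasDerivAt (fun w => P σ q p C F x1 x2 w)
      (q * deriv F (x1 * p (x1 + x2) - w) - (1 - q) * σ) w :=
  ((((hasDerivAt_id w).const_mul ((1 - q) * σ)).const_sub
    ((1 - q * σ) * x1 * p (x1 + x2) - C x1)).sub
    ((hF.hasDerivAt.comp_const_sub _ w).const_mul q)).congr_deriv (by ring)

theorem hasDerivAt_P_x1 {w : ℝ} (hp : DifferentiableAt ℝ p (x1 + x2))
    (hC : DifferentiableAt ℝ C x1) (hF : DifferentiableAt ℝ F (x1 * p (x1 + x2) - w)) :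
    HasDerivAt (fun v => P σ q p C F v x2 w)
      ((1 - q * σ - q * deriv F (x1 * p (x1 + x2) - w)) * (p (x1 + x2) + x1 * deriv p (x1 + x2))
        - deriv C x1) x1 := by
  have hR : HasDerivAt (fun v => v * p (v + x2)) (p (x1 + x2) + x1 * deriv p (x1 + x2)) x1 :=
    ((hasDerivAt_id x1).mul (hp.hasDerivAt.comp_add_const x1 x2)).congr_deriv (by simp)
  have hFv := hF.hasDerivAt.comp x1 (hR.sub_const w)
  have h := (((hR.const_mul (1 - q * σ)).sub hC.hasDerivAt).sub_const ((1 - q) * σ * w)).sub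
    (hFv.const_mul q)
  simp only [P, mul_assoc (1 - q * σ)]
  exact h.congr_deriv (by ring)

theorem hasDerivAt_P_x2 {w : ℝ} (hp : DifferentiableAt ℝ p (x1 + x2))
    (hF : DifferentiableAt ℝ F (x1 * p (x1 + x2) - w)) :
    HasDerivAt (fun u => P σ q p C F x1 u w)
      ((1 - q * σ - q * deriv F (x1 * p (x1 + x2) - w)) * (x1 * deriv p (x1 + x2))) x2 := by
  have hR : HasDerivAt (fun u => x1 * p (x1 + u)) (x1 * deriv p (x1 + x2)) x2 :=
    (hp.hasDerivAt.comp_const_add x1 x2).const_mul x1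
  have hFu := hF.hasDerivAt.comp x2 (hR.sub_const w)
  have h := (((hR.const_mul (1 - q * σ)).sub_const (C x1)).sub_const ((1 - q) * σ * w)).sub
    (hFu.const_mul q)
  simp only [P, mul_assoc (1 - q * σ)]
  exact h.congr_deriv (by ring)

variable {z1 : ℝ}

theorem Pz1z1_eq (hF : Differentiable ℝ F)
    (hF' : DifferentiableAt ℝ (deriv F) (x1 * p (x1 + x2) - z1)) :
    Pz1z1 σ q p C F x1 x2 z1 = -(q * deriv (deriv F) (x1 * p (x1 + x2) - z1)) := by
  have hd : deriv (fun w => P σ q p C F x1 x2 w) =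
      fun w => q * deriv F (x1 * p (x1 + x2) - w) - (1 - q) * σ :=
    funext fun w => (hasDerivAt_P_z1 (hF _)).deriv
  rw [Pz1z1, hd]
  convert ((hF'.hasDerivAt.comp_const_sub _ z1).const_mul q).sub_const _ |>.deriv using 1
  ring

theorem Px1z1_eq (hp : DifferentiableAt ℝ p (x1 + x2)) (hC : DifferentiableAt ℝ C x1)
    (hF : Differentiable ℝ F) (hF' : DifferentiableAt ℝ (deriv F) (x1 * p (x1 + x2) - z1)) :
    Px1z1 σ q p C F x1 x2 z1 = q * deriv (deriv F) (x1 * p (x1 + x2) - z1) *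
      (p (x1 + x2) + x1 * deriv p (x1 + x2)) := by
  have hd : (fun w => deriv (fun v => P σ q p C F v x2 w) x1) =
      fun w => (1 - q * σ - q * deriv F (x1 * p (x1 + x2) - w)) *
        (p (x1 + x2) + x1 * deriv p (x1 + x2)) - deriv C x1 :=
    funext fun w => (hasDerivAt_P_x1 hp hC (hF _)).deriv
  rw [Px1z1, hd]
  convert ((((hF'.hasDerivAt.comp_const_sub _ z1).const_mul q).const_sub (1 - q * σ)).mul_const
    _).sub_const _ |>.deriv using 1
  ring

theorem Px2z1_eq (hp : DifferentiableAt ℝ p (x1 + x2))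
    (hF : Differentiable ℝ F) (hF' : DifferentiableAt ℝ (deriv F) (x1 * p (x1 + x2) - z1)) :
    Px2z1 σ q p C F x1 x2 z1 = q * deriv (deriv F) (x1 * p (x1 + x2) - z1) *
      (x1 * deriv p (x1 + x2)) := by
  have hd : (fun w => deriv (fun u => P σ q p C F x1 u w) x2) =
      fun w => (1 - q * σ - q * deriv F (x1 * p (x1 + x2) - w)) * (x1 * deriv p (x1 + x2)) :=
    funext fun w => (hasDerivAt_P_x2 hp (hF _)).deriv
  rw [Px2z1, hd]
  convert (((hF'.hasDerivAt.comp_const_sub _ z1).const_mul q).const_sub (1 - q * σ)).mul_const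
    _ |>.deriv using 1
  ring

end ProfitDerivatives

theorem stmt_3_general (σ q : ℝ) (hq0 : 0 < q)
    (p C F : ℝ → ℝ) (hp : ContDiff ℝ 2 p) (hC : ContDiff ℝ 2 C) (hF : ContDiff ℝ 2 F)
    (x1 x2 z1 : ℝ)
    (hF2 : 0 < deriv (deriv F) (x1 * p (x1 + x2) - z1))
    (hppos : 0 < p (x1 + x2))
    (hmr : 0 < p (x1 + x2) + x1 * deriv p (x1 + x2))
    (hIn2 : Px1x1 σ q p C F x1 x2 z1 * Pz1z1 σ q p C F x1 x2 z1
        - (Px1z1 σ q p C F x1 x2 z1) ^ 2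
      > |Px1x2 σ q p C F x1 x2 z1 * Pz1z1 σ q p C F x1 x2 z1
          - Px1z1 σ q p C F x1 x2 z1 * Px2z1 σ q p C F x1 x2 z1|) :
    -Px1x1 σ q p C F x1 x2 z1 ≥ -Px1x2 σ q p C F x1 x2 z1 := by
  have hpd := hp.differentiable two_ne_zero (x1 + x2)
  have hFd := hF.differentiable two_ne_zero
  have hF'd : Differentiable ℝ (deriv F) := (hF.iterate_deriv' 1 1).differentiable one_ne_zero
  rw [Pz1z1_eq hFd (hF'd _), Px1z1_eq hpd (hC.differentiable two_ne_zero x1) hFd (hF'd _),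
    Px2z1_eq hpd hFd (hF'd _)] at hIn2
  have hgap : 0 < (p (x1 + x2) + x1 * deriv p (x1 + x2)) *
      (p (x1 + x2) + x1 * deriv p (x1 + x2) - x1 * deriv p (x1 + x2)) := by
    rw [add_sub_cancel_right]; exact mul_pos hmr hppos
  exact neg_le_neg (lt_of_det_gt_abs_det (mul_pos hq0 hF2) hgap hIn2).le

/-- at a point satisfying the first-order condition for `z1` with
`F'' > 0`, `p > 0`, `p + x1 p' > 0` there, inequality (In2) implies
`-P_{x1x1} ≥ -P_{x1x2}`. -/
theorem stmt_3 (σ q : ℝ) (hσ0 : 0 < σ) (hσ1 : σ < 1) (hq0 : 0 < q) (hq1 : q < 1)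
    (p C F : ℝ → ℝ) (hp : ContDiff ℝ 2 p) (hC : ContDiff ℝ 2 C) (hF : ContDiff ℝ 2 F)
    (x1 x2 z1 : ℝ)
    (hfoc2 : q * deriv F (x1 * p (x1 + x2) - z1) = (1 - q) * σ)
    (hF2 : 0 < deriv (deriv F) (x1 * p (x1 + x2) - z1))
    (hppos : 0 < p (x1 + x2))
    (hmr : 0 < p (x1 + x2) + x1 * deriv p (x1 + x2))
    (hIn2 : Px1x1 σ q p C F x1 x2 z1 * Pz1z1 σ q p C F x1 x2 z1
        - (Px1z1 σ q p C F x1 x2 z1) ^ 2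
      > |Px1x2 σ q p C F x1 x2 z1 * Pz1z1 σ q p C F x1 x2 z1
          - Px1z1 σ q p C F x1 x2 z1 * Px2z1 σ q p C F x1 x2 z1|) :
    -Px1x1 σ q p C F x1 x2 z1 ≥ -Px1x2 σ q p C F x1 x2 z1 :=
  stmt_3_general σ q hq0 p C F hp hC hF x1 x2 z1 hF2 hppos hmr hIn2
end

section
/- Let (x1, x2, z1) be a point satisfying the first-order conditions (1 − σ)·(p(x1 + x2) + x1·p′(x1 + x2)) = C′(x1) and q·F′(x1·p(x1 + x2) − z1) = (1 − q)·σ, with C′(x1) > 0, p(x1 + x2) > 0 and F″(x1·p(x1 + x2) − z1) > 0. Assume the inequality (In2): P_{x1x1}·P_{z1z1} − (P_{x1z1})² > |P_{x1x2}·P_{z1z1} − P_{x1z1}·P_{x2z1}|, the inequality −(2·p′(x1 + x2) + x1·p″(x1 + x2) − C″(x1)/(1 − σ)) > |p′(x1 + x2) + x1·p″(x1 + x2)|, and p(x1 + x2) + 2·x1·p′(x1 + x2) ≥ 0. Then the inequality (In3): −P_{x1x1} ≥ |P_{x1x2}| holds at this point, where subscripts on P denote iterated partial derivatives. -/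
noncomputable def marginalProfit (σ q : ℝ) (p C F : ℝ → ℝ) (x1 x2 z1 : ℝ) : ℝ :=
  (1 - q * σ) * (p (x1 + x2) + x1 * deriv p (x1 + x2)) - deriv C x1
    - q * deriv F (x1 * p (x1 + x2) - z1) * (p (x1 + x2) + x1 * deriv p (x1 + x2))

section Derivatives

variable {σ q : ℝ} {p C F : ℝ → ℝ} {x1 x2 z1 : ℝ}

lemma hasDerivAt_mul_comp_add_const {f : ℝ → ℝ} {x a : ℝ} (hf : DifferentiableAt ℝ f (x + a)) :
    HasDerivAt (fun v => v * f (v + a)) (f (x + a) + x * deriv f (x + a)) x :=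
  ((hasDerivAt_id' x).mul (hf.hasDerivAt.comp_add_const x a)).congr_deriv (by ring)

lemma hasDerivAt_P_fst (hp : DifferentiableAt ℝ p (x1 + x2)) (hC : DifferentiableAt ℝ C x1)
    (hF : DifferentiableAt ℝ F (x1 * p (x1 + x2) - z1)) :
    HasDerivAt (fun v => P σ q p C F v x2 z1) (marginalProfit σ q p C F x1 x2 z1) x1 := by
  have hR := hasDerivAt_mul_comp_add_const hp
  have h := (((hR.const_mul (1 - q * σ)).sub hC.hasDerivAt).sub_const ((1 - q) * σ * z1)).sub
    ((hF.hasDerivAt.comp x1 (hR.sub_const z1)).const_mul q)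
  have hP : (fun v => P σ q p C F v x2 z1) = fun v => (1 - q * σ) * (v * p (v + x2)) - C v
      - (1 - q) * σ * z1 - q * F (v * p (v + x2) - z1) := by
    funext v
    simp only [P]
    ring
  rw [hP]
  exact h.congr_deriv (by simp only [marginalProfit]; ring)

lemma deriv_P_fst (hp : Differentiable ℝ p) (hC : Differentiable ℝ C) (hF : Differentiable ℝ F) :
    deriv (fun v => P σ q p C F v x2 z1) x1 = marginalProfit σ q p C F x1 x2 z1 :=
  (hasDerivAt_P_fst (hp _) (hC _) (hF _)).deriv

lemma hasDerivAt_marginalProfit_fst (hp : DifferentiableAt ℝ p (x1 + x2))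
    (hp' : DifferentiableAt ℝ (deriv p) (x1 + x2)) (hC' : DifferentiableAt ℝ (deriv C) x1)
    (hF' : DifferentiableAt ℝ (deriv F) (x1 * p (x1 + x2) - z1)) :
    HasDerivAt (fun v => marginalProfit σ q p C F v x2 z1)
      ((1 - q * σ) * (2 * deriv p (x1 + x2) + x1 * deriv (deriv p) (x1 + x2))
        - deriv (deriv C) x1
        - q * (deriv (deriv F) (x1 * p (x1 + x2) - z1)
              * (p (x1 + x2) + x1 * deriv p (x1 + x2)) ^ 2
            + deriv F (x1 * p (x1 + x2) - z1)
              * (2 * deriv p (x1 + x2) + x1 * deriv (deriv p) (x1 + x2)))) x1 := by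
  have hA := (hp.hasDerivAt.comp_add_const x1 x2).add (hasDerivAt_mul_comp_add_const hp')
  have hF'' := hF'.hasDerivAt.comp x1 ((hasDerivAt_mul_comp_add_const hp).sub_const z1)
  have h := ((hA.const_mul (1 - q * σ)).sub hC'.hasDerivAt).sub ((hF''.const_mul q).mul hA)
  exact h.congr_deriv (by simp only [Function.comp_apply, Pi.add_apply]; ring)

lemma hasDerivAt_marginalProfit_snd (hp : DifferentiableAt ℝ p (x1 + x2))
    (hp' : DifferentiableAt ℝ (deriv p) (x1 + x2))
    (hF' : DifferentiableAt ℝ (deriv F) (x1 * p (x1 + x2) - z1)) :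
    HasDerivAt (fun u => marginalProfit σ q p C F x1 u z1)
      ((1 - q * σ) * (deriv p (x1 + x2) + x1 * deriv (deriv p) (x1 + x2))
        - q * (deriv (deriv F) (x1 * p (x1 + x2) - z1) * (x1 * deriv p (x1 + x2))
              * (p (x1 + x2) + x1 * deriv p (x1 + x2))
            + deriv F (x1 * p (x1 + x2) - z1)
              * (deriv p (x1 + x2) + x1 * deriv (deriv p) (x1 + x2)))) x2 := by
  have hA := (hp.hasDerivAt.comp_const_add x1 x2).add
    ((hp'.hasDerivAt.comp_const_add x1 x2).const_mul x1)
  have hF'' := hF'.hasDerivAt.comp x2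
    (((hp.hasDerivAt.comp_const_add x1 x2).const_mul x1).sub_const z1)
  have h := (((hA.const_mul (1 - q * σ)).sub_const (deriv C x1)).sub ((hF''.const_mul q).mul hA))
  exact h.congr_deriv (by simp only [Function.comp_apply, Pi.add_apply]; ring)

lemma Px1x1_eq (hp : ContDiff ℝ 2 p) (hC : ContDiff ℝ 2 C) (hF : ContDiff ℝ 2 F) :
    Px1x1 σ q p C F x1 x2 z1 =
      (1 - q * σ) * (2 * deriv p (x1 + x2) + x1 * deriv (deriv p) (x1 + x2))
        - deriv (deriv C) x1
        - q * (deriv (deriv F) (x1 * p (x1 + x2) - z1)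
              * (p (x1 + x2) + x1 * deriv p (x1 + x2)) ^ 2
            + deriv F (x1 * p (x1 + x2) - z1)
              * (2 * deriv p (x1 + x2) + x1 * deriv (deriv p) (x1 + x2))) := by
  have hd : ∀ {f : ℝ → ℝ}, ContDiff ℝ 2 f → Differentiable ℝ f :=
    fun hf => hf.differentiable two_ne_zero
  have hP : deriv (fun v => P σ q p C F v x2 z1) = fun v => marginalProfit σ q p C F v x2 z1 :=
    funext fun v => deriv_P_fst (hd hp) (hd hC) (hd hF)
  rw [Px1x1, hP]
  exact (hasDerivAt_marginalProfit_fst (hd hp _) (hp.differentiable_deriv_two _)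
    (hC.differentiable_deriv_two _) (hF.differentiable_deriv_two _)).deriv

lemma Px1x2_eq (hp : ContDiff ℝ 2 p) (hC : Differentiable ℝ C) (hF : ContDiff ℝ 2 F) :
    Px1x2 σ q p C F x1 x2 z1 =
      (1 - q * σ) * (deriv p (x1 + x2) + x1 * deriv (deriv p) (x1 + x2))
        - q * (deriv (deriv F) (x1 * p (x1 + x2) - z1) * (x1 * deriv p (x1 + x2))
              * (p (x1 + x2) + x1 * deriv p (x1 + x2))
            + deriv F (x1 * p (x1 + x2) - z1)
              * (deriv p (x1 + x2) + x1 * deriv (deriv p) (x1 + x2))) := by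
  have hP : (fun u => deriv (fun v => P σ q p C F v u z1) x1)
      = fun u => marginalProfit σ q p C F x1 u z1 :=
    funext fun u => deriv_P_fst (hp.differentiable two_ne_zero) hC (hF.differentiable two_ne_zero)
  rw [Px1x2, hP]
  exact (hasDerivAt_marginalProfit_snd (hp.differentiable two_ne_zero _)
    (hp.differentiable_deriv_two _) (hF.differentiable_deriv_two _)).deriv

end Derivatives

lemma abs_le_abs_add_of_mul_nonneg {a b : ℝ} (h : 0 ≤ a * (a + 2 * b)) : |b| ≤ |a + b| :=
  sq_le_sq.mp (by linear_combination h)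

lemma abs_sub_mul_lt {s k a b d e : ℝ} (hs : 0 < s) (hk : 0 ≤ k) (hba : |b| ≤ |a|)
    (hd : |d| < e) : |s * d - k * b * a| < s * e + k * a ^ 2 :=
  calc |s * d - k * b * a| ≤ s * |d| + k * (|b| * |a|) := by
        simpa [abs_mul, abs_of_pos hs, abs_of_nonneg hk, mul_assoc] using abs_sub (s * d) (k * b * a)
    _ ≤ s * |d| + k * (|a| * |a|) := by gcongr
    _ < s * e + k * a ^ 2 := by
        rw [abs_mul_abs_self, ← sq]
        gcongr

theorem stmt_4_general (σ q : ℝ) (hσ1 : σ < 1) (hq0 : 0 < q)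
    (p C F : ℝ → ℝ) (hp : ContDiff ℝ 2 p) (hC : ContDiff ℝ 2 C) (hF : ContDiff ℝ 2 F)
    (x1 x2 z1 : ℝ)
    (hfoc2 : q * deriv F (x1 * p (x1 + x2) - z1) = (1 - q) * σ)
    (hppos : 0 < p (x1 + x2))
    (hF2 : 0 < deriv (deriv F) (x1 * p (x1 + x2) - z1))
    (hineq : -(2 * deriv p (x1 + x2) + x1 * deriv (deriv p) (x1 + x2)
          - deriv (deriv C) x1 / (1 - σ))
        > |deriv p (x1 + x2) + x1 * deriv (deriv p) (x1 + x2)|)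
    (hsum : 0 ≤ p (x1 + x2) + 2 * x1 * deriv p (x1 + x2)) :
    -Px1x1 σ q p C F x1 x2 z1 ≥ |Px1x2 σ q p C F x1 x2 z1| := by
  have hs : 0 < 1 - σ := sub_pos.2 hσ1
  have hdom : |x1 * deriv p (x1 + x2)| ≤ |p (x1 + x2) + x1 * deriv p (x1 + x2)| :=
    abs_le_abs_add_of_mul_nonneg (mul_nonneg hppos.le (by linarith))
  have key := abs_sub_mul_lt hs (mul_nonneg hq0.le hF2.le) hdom hineq
  calc |Px1x2 σ q p C F x1 x2 z1| = _ := by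
        rw [Px1x2_eq hp (hC.differentiable two_ne_zero) hF]
        congr 1
        linear_combination (-(deriv p (x1 + x2) + x1 * deriv (deriv p) (x1 + x2))) * hfoc2
    _ ≤ _ := key.le
    _ = -Px1x1 σ q p C F x1 x2 z1 := by
        rw [Px1x1_eq hp hC hF]
        linear_combination (-(2 * deriv p (x1 + x2) + x1 * deriv (deriv p) (x1 + x2))) * hfoc2
          + mul_div_cancel₀ (deriv (deriv C) x1) hs.ne'

/-- at a point satisfying both first-order conditions with
`C' > 0`, `p > 0` and `F'' > 0` there, if (In2) holds, together with
`-(2p' + x1 p'' - C''/(1-σ)) > |p' + x1 p''|` and `p + 2 x1 p' ≥ 0`, then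
inequality (In3): `-P_{x1x1} ≥ |P_{x1x2}|` holds. -/
theorem stmt_4 (σ q : ℝ) (hσ0 : 0 < σ) (hσ1 : σ < 1) (hq0 : 0 < q) (hq1 : q < 1)
    (p C F : ℝ → ℝ) (hp : ContDiff ℝ 2 p) (hC : ContDiff ℝ 2 C) (hF : ContDiff ℝ 2 F)
    (x1 x2 z1 : ℝ)
    (hfoc1 : (1 - σ) * (p (x1 + x2) + x1 * deriv p (x1 + x2)) = deriv C x1)
    (hfoc2 : q * deriv F (x1 * p (x1 + x2) - z1) = (1 - q) * σ)
    (hC' : 0 < deriv C x1)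
    (hppos : 0 < p (x1 + x2))
    (hF2 : 0 < deriv (deriv F) (x1 * p (x1 + x2) - z1))
    (hIn2 : Px1x1 σ q p C F x1 x2 z1 * Pz1z1 σ q p C F x1 x2 z1
        - (Px1z1 σ q p C F x1 x2 z1) ^ 2
      > |Px1x2 σ q p C F x1 x2 z1 * Pz1z1 σ q p C F x1 x2 z1
          - Px1z1 σ q p C F x1 x2 z1 * Px2z1 σ q p C F x1 x2 z1|)
    (hineq : -(2 * deriv p (x1 + x2) + x1 * deriv (deriv p) (x1 + x2)
          - deriv (deriv C) x1 / (1 - σ))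
        > |deriv p (x1 + x2) + x1 * deriv (deriv p) (x1 + x2)|)
    (hsum : 0 ≤ p (x1 + x2) + 2 * x1 * deriv p (x1 + x2)) :
    -Px1x1 σ q p C F x1 x2 z1 ≥ |Px1x2 σ q p C F x1 x2 z1| :=
  stmt_4_general σ q hσ1 hq0 p C F hp hC hF x1 x2 z1 hfoc2 hppos hF2 hineq hsum
end
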